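/- arXiv:1507.00782 — 4 statements merged into one kernel-verified Lean document; each statement's English description precedes it below -/
import Mathlib

section
/- If c : X × X → ℝ is symmetric and the energy functional K(Q) = ∫∫ c(x,y) dQ(x) dQ(y) is convex on the set of Borel probability measures P(X), then c is balanced positive definite: for all distinct points x₁,…,xₙ ∈ X and reals a₁,…,aₙ with ∑ᵢ aᵢ = 0, we have ∑ᵢⱼ c(xᵢ,xⱼ) aᵢ aⱼ ≥ 0. -/
open MeasureTheory ENNReal

/-!
Write a nonzero balanced vector as `a = s • (p - q)` with `p`, `q` probability vectors (the
normalised positive and negative parts of `a`). On the discrete measures `μ_w = ∑ wᵢ δ_{xᵢ}` the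
energy is the quadratic form `w ↦ ∑ᵢⱼ c(xᵢ,xⱼ) wᵢ wⱼ`, and for any quadratic form
`t Q(p) + (1-t) Q(q) - Q(t p + (1-t) q) = t (1-t) Q(p - q)`.
Midpoint convexity of the energy therefore gives `Q(p - q) ≥ 0`, hence `Q(a) = s² Q(p - q) ≥ 0`.
-/

section QuadraticSum

variable {ι R : Type*} [Fintype ι] [CommRing R]

theorem quadratic_sum_smul (f : ι → ι → R) (s : R) (v : ι → R) :
    ∑ i, ∑ j, f i j * (s * v i) * (s * v j) = s ^ 2 * ∑ i, ∑ j, f i j * v i * v j := by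
  simp only [Finset.mul_sum]
  exact Finset.sum_congr rfl fun i _ => Finset.sum_congr rfl fun j _ => by ring

theorem quadratic_sum_convexCombination (f : ι → ι → R) (p q : ι → R) (t : R) :
    t * ∑ i, ∑ j, f i j * p i * p j + (1 - t) * ∑ i, ∑ j, f i j * q i * q j
      - ∑ i, ∑ j, f i j * (t * p i + (1 - t) * q i) * (t * p j + (1 - t) * q j)
      = t * (1 - t) * ∑ i, ∑ j, f i j * (p i - q i) * (p j - q j) := by
  simp only [Finset.mul_sum, ← Finset.sum_add_distrib, ← Finset.sum_sub_distrib]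
  exact Finset.sum_congr rfl fun i _ => Finset.sum_congr rfl fun j _ => by ring

end QuadraticSum

theorem exists_eq_smul_sub_of_sum_eq_zero {ι : Type*} [Fintype ι] {a : ι → ℝ}
    (ha : ∑ i, a i = 0) (ha' : a ≠ 0) :
    ∃ s : ℝ, ∃ p q : ι → ℝ, (∀ i, 0 ≤ p i) ∧ ∑ i, p i = 1 ∧ (∀ i, 0 ≤ q i) ∧ ∑ i, q i = 1 ∧
      a = fun i => s * (p i - q i) := by
  set s := ∑ i, max (a i) 0
  have hneg : ∑ i, max (-a i) 0 = s := by
    have h : ∑ i, (max (a i) 0 - max (-a i) 0) = 0 := by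
      simpa only [max_zero_sub_max_neg_zero_eq_self] using ha
    rw [Finset.sum_sub_distrib] at h
    linarith
  have hs : 0 < s := by
    refine (Finset.sum_nonneg fun i _ => le_max_right _ _).lt_of_ne fun hs => ha' ?_
    have hpos := (Finset.sum_eq_zero_iff_of_nonneg fun i _ => le_max_right (a i) 0).1 hs.symm
    have hneg := (Finset.sum_eq_zero_iff_of_nonneg fun i _ => le_max_right (-a i) 0).1
      (hneg.trans hs.symm)
    ext i
    rw [← max_zero_sub_max_neg_zero_eq_self (a i), hpos i (Finset.mem_univ i),
      hneg i (Finset.mem_univ i), sub_zero, Pi.zero_apply]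
  refine ⟨s, fun i => max (a i) 0 / s, fun i => max (-a i) 0 / s, fun i => by positivity,
    by rw [← Finset.sum_div, div_self hs.ne'], fun i => by positivity,
    by rw [← Finset.sum_div, hneg, div_self hs.ne'], funext fun i => ?_⟩
  rw [← sub_div, max_zero_sub_max_neg_zero_eq_self, mul_div_cancel₀ _ hs.ne']

section WeightedDiracs

variable {ι X : Type*} [Fintype ι] [MeasurableSpace X]

noncomputable def weightedDiracs (x : ι → X) (w : ι → ℝ) : Measure X :=
  ∑ i, ENNReal.ofReal (w i) • Measure.dirac (x i)

theorem isProbabilityMeasure_weightedDiracs (x : ι → X) {w : ι → ℝ} (hw : ∀ i, 0 ≤ w i)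
    (hw1 : ∑ i, w i = 1) : IsProbabilityMeasure (weightedDiracs x w) := by
  constructor
  simp only [weightedDiracs, Measure.coe_finsetSum, Finset.sum_apply, Measure.smul_apply,
    measure_univ, smul_eq_mul, mul_one]
  rw [← ENNReal.ofReal_sum_of_nonneg fun i _ => hw i, hw1, ENNReal.ofReal_one]

theorem weightedDiracs_convexCombination (x : ι → X) {p q : ι → ℝ} (hp : ∀ i, 0 ≤ p i)
    (hq : ∀ i, 0 ≤ q i) {t : ℝ} (ht₀ : 0 ≤ t) (ht₁ : t ≤ 1) :
    ENNReal.ofReal t • weightedDiracs x p + ENNReal.ofReal (1 - t) • weightedDiracs x q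
      = weightedDiracs x fun i => t * p i + (1 - t) * q i := by
  simp only [weightedDiracs, Finset.smul_sum, ← Finset.sum_add_distrib, smul_smul, ← add_smul]
  refine Finset.sum_congr rfl fun i _ => ?_
  have ht' : 0 ≤ 1 - t := sub_nonneg.2 ht₁
  rw [← ENNReal.ofReal_mul ht₀, ← ENNReal.ofReal_mul ht',
    ← ENNReal.ofReal_add (mul_nonneg ht₀ (hp i)) (mul_nonneg ht' (hq i))]

variable [MeasurableSingletonClass X]

theorem integral_weightedDiracs (x : ι → X) {w : ι → ℝ} (hw : ∀ i, 0 ≤ w i) (f : X → ℝ) :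
    ∫ y, f y ∂weightedDiracs x w = ∑ i, w i * f (x i) := by
  rw [weightedDiracs, integral_finsetSum_measure fun i _ =>
    (integrable_dirac enorm_lt_top).smul_measure ofReal_ne_top]
  refine Finset.sum_congr rfl fun i _ => ?_
  rw [integral_smul_measure, integral_dirac, ENNReal.toReal_ofReal (hw i), smul_eq_mul]

theorem energy_weightedDiracs (c : X → X → ℝ) (x : ι → X) {w : ι → ℝ} (hw : ∀ i, 0 ≤ w i) :
    ∫ y, ∫ z, c y z ∂weightedDiracs x w ∂weightedDiracs x w
      = ∑ i, ∑ j, c (x i) (x j) * w i * w j := by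
  simp only [integral_weightedDiracs x hw, Finset.mul_sum]
  exact Finset.sum_congr rfl fun i _ => Finset.sum_congr rfl fun j _ => by ring

end WeightedDiracs

theorem stmt_1_general {X : Type*} [TopologicalSpace X] [PolishSpace X]
    [MeasurableSpace X] [BorelSpace X]
    (c : X → X → ℝ)
    (K : Measure X → ℝ)
    (hK : ∀ Q : Measure X, K Q = ∫ x, ∫ y, c x y ∂Q ∂Q)
    (hconv : ∀ (Q Q' : Measure X), IsProbabilityMeasure Q → IsProbabilityMeasure Q' →
      ∀ t : ℝ, 0 ≤ t → t ≤ 1 →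
        K (ENNReal.ofReal t • Q + ENNReal.ofReal (1 - t) • Q')
          ≤ t * K Q + (1 - t) * K Q') :
    ∀ (n : ℕ) (x : Fin n → X), Function.Injective x →
      ∀ a : Fin n → ℝ, ∑ i, a i = 0 →
        0 ≤ ∑ i, ∑ j, c (x i) (x j) * a i * a j := by
  intro n x _ a ha
  rcases eq_or_ne a 0 with rfl | ha'
  · simp
  obtain ⟨s, p, q, hp, hp1, hq, hq1, rfl⟩ := exists_eq_smul_sub_of_sum_eq_zero ha ha'
  have hmid := hconv _ _ (isProbabilityMeasure_weightedDiracs x hp hp1)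
    (isProbabilityMeasure_weightedDiracs x hq hq1) (1 / 2) (by norm_num) (by norm_num)
  have hmid_nonneg : ∀ i, 0 ≤ 1 / 2 * p i + (1 - 1 / 2) * q i := fun i => by
    linarith [hp i, hq i]
  rw [weightedDiracs_convexCombination x hp hq (by norm_num) (by norm_num), hK, hK, hK,
    energy_weightedDiracs c x hp, energy_weightedDiracs c x hq,
    energy_weightedDiracs c x hmid_nonneg] at hmid
  have hdiff := quadratic_sum_convexCombination (fun i j => c (x i) (x j)) p q (1 / 2)
  have hpq : 0 ≤ ∑ i, ∑ j, c (x i) (x j) * (p i - q i) * (p j - q j) := by linarith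
  rw [quadratic_sum_smul (fun i j => c (x i) (x j))]
  exact mul_nonneg (sq_nonneg s) hpq

/-- If the energy functional `K` is convex on Borel probability measures, then `c` is
balanced positive definite. -/
theorem stmt_1 {X : Type*} [TopologicalSpace X] [PolishSpace X]
    [MeasurableSpace X] [BorelSpace X]
    (c : X → X → ℝ)
    (hc_cont : Continuous fun p : X × X => c p.1 p.2)
    (hc_bdd : ∃ M : ℝ, ∀ x y, |c x y| ≤ M)
    (hc_symm : ∀ x y, c x y = c y x)
    (hc_nonneg : ∀ x y, 0 ≤ c x y)
    (K : Measure X → ℝ)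
    (hK : ∀ Q : Measure X, K Q = ∫ x, ∫ y, c x y ∂Q ∂Q)
    (hconv : ∀ (Q Q' : Measure X), IsProbabilityMeasure Q → IsProbabilityMeasure Q' →
      ∀ t : ℝ, 0 ≤ t → t ≤ 1 →
        K (ENNReal.ofReal t • Q + ENNReal.ofReal (1 - t) • Q')
          ≤ t * K Q + (1 - t) * K Q') :
    ∀ (n : ℕ) (x : Fin n → X), Function.Injective x →
      ∀ a : Fin n → ℝ, ∑ i, a i = 0 →
        0 ≤ ∑ i, ∑ j, c (x i) (x j) * a i * a j :=
  stmt_1_general c K hK hconv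
end

section
/- If c : X × X → ℝ is continuous, bounded, symmetric, and balanced positive definite, then the energy functional K(Q) = ∫∫ c(x,y) dQ(x) dQ(y) is convex on the set of Borel probability measures on X. -/
/-!
Expanding the double integral of the mixture `t Q + (1 - t) Q'` gives
`t K(Q) + (1 - t) K(Q') - K(t Q + (1 - t) Q') = t (1 - t) ∫∫ c d(Q - Q') d(Q - Q')`,
so convexity amounts to the nonnegativity of the energy of the signed measure `Q - Q'`, which has
total mass zero. For the pushforwards of `Q` and `Q'` under a simple function this is exactly
balanced positive definiteness of `c`. Approximating the identity of `X` pointwise by simple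
functions and using dominated convergence gives it in general.
-/

open MeasureTheory ENNReal Filter Topology Function

section Energy

variable {α : Type*} [MeasurableSpace α]

noncomputable def crossEnergy (k : α → α → ℝ) (μ ν : Measure α) : ℝ := ∫ x, ∫ y, k x y ∂ν ∂μ

lemma integral_smul_add_smul_measure {μ ν : Measure α} {f : α → ℝ}
    (hμ : Integrable f μ) (hν : Integrable f ν) {a b : ℝ} (ha : 0 ≤ a) (hb : 0 ≤ b) :
    ∫ x, f x ∂(ENNReal.ofReal a • μ + ENNReal.ofReal b • ν)
      = a * ∫ x, f x ∂μ + b * ∫ x, f x ∂ν := by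
  rw [integral_add_measure (hμ.smul_measure ofReal_ne_top) (hν.smul_measure ofReal_ne_top),
    integral_smul_measure, integral_smul_measure, toReal_ofReal ha, toReal_ofReal hb,
    smul_eq_mul, smul_eq_mul]

lemma crossEnergy_smul_add_smul {k : α → α → ℝ} (hk : StronglyMeasurable (uncurry k))
    {M : ℝ} (hM : ∀ x y, |k x y| ≤ M) (μ ν : Measure α) [IsFiniteMeasure μ] [IsFiniteMeasure ν]
    {a b : ℝ} (ha : 0 ≤ a) (hb : 0 ≤ b) :
    crossEnergy k (ENNReal.ofReal a • μ + ENNReal.ofReal b • ν)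
        (ENNReal.ofReal a • μ + ENNReal.ofReal b • ν)
      = a ^ 2 * crossEnergy k μ μ + a * b * (crossEnergy k μ ν + crossEnergy k ν μ)
        + b ^ 2 * crossEnergy k ν ν := by
  have hsection : ∀ x (ρ : Measure α) [IsFiniteMeasure ρ], Integrable (k x) ρ := fun x ρ _ =>
    .of_bound (hk.comp_measurable measurable_prodMk_left).aestronglyMeasurable M
      (ae_of_all _ fun y => hM x y)
  have hpotential : ∀ (ρ σ : Measure α) [IsFiniteMeasure ρ] [IsFiniteMeasure σ],
      Integrable (fun x => ∫ y, k x y ∂σ) ρ := fun ρ σ _ _ =>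
    .of_bound hk.integral_prod_right.aestronglyMeasurable (M * σ.real Set.univ)
      (ae_of_all _ fun x => norm_integral_le_of_norm_le_const (ae_of_all _ fun y => hM x y))
  have hmixed : ∀ (ρ : Measure α) [IsFiniteMeasure ρ],
      Integrable (fun x => a * ∫ y, k x y ∂μ + b * ∫ y, k x y ∂ν) ρ := fun ρ _ =>
    ((hpotential ρ μ).const_mul a).add ((hpotential ρ ν).const_mul b)
  unfold crossEnergy
  simp_rw [integral_smul_add_smul_measure (hsection _ μ) (hsection _ ν) ha hb]
  rw [integral_smul_add_smul_measure (hmixed μ) (hmixed ν) ha hb,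
    integral_add ((hpotential μ μ).const_mul a) ((hpotential μ ν).const_mul b),
    integral_add ((hpotential ν μ).const_mul a) ((hpotential ν ν).const_mul b)]
  simp only [integral_const_mul]
  ring

lemma tendsto_crossEnergy_of_dominated {F : ℕ → α → α → ℝ} {k : α → α → ℝ}
    (hF : ∀ n, StronglyMeasurable (uncurry (F n))) {M : ℝ} (hM : ∀ n x y, |F n x y| ≤ M)
    (hlim : ∀ x y, Tendsto (fun n => F n x y) atTop (𝓝 (k x y)))
    (μ ν : Measure α) [IsFiniteMeasure μ] [IsFiniteMeasure ν] :
    Tendsto (fun n => crossEnergy (F n) μ ν) atTop (𝓝 (crossEnergy k μ ν)) := by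
  refine tendsto_integral_of_dominated_convergence (fun _ => M * ν.real Set.univ)
    (fun n => (hF n).integral_prod_right.aestronglyMeasurable) (integrable_const _)
    (fun n => ae_of_all _ fun x =>
      norm_integral_le_of_norm_le_const (ae_of_all _ fun y => hM n x y)) (ae_of_all _ fun x => ?_)
  exact tendsto_integral_of_dominated_convergence (fun _ => M)
    (fun n => ((hF n).comp_measurable measurable_prodMk_left).aestronglyMeasurable)
    (integrable_const _) (fun n => ae_of_all _ fun y => hM n x y) (ae_of_all _ (hlim x))

lemma integral_comp_simpleFunc {β : Type*} (T : SimpleFunc α β) (g : β → ℝ) (μ : Measure α)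
    [IsFiniteMeasure μ] :
    ∫ x, g (T x) ∂μ = ∑ y ∈ T.range, μ.real (T ⁻¹' {y}) * g y := by
  have hsplit : (fun x => g (T x))
      = fun x => ∑ y ∈ T.range, (T ⁻¹' {y}).indicator (fun _ => g y) x := by
    funext x
    rw [Finset.sum_eq_single_of_mem (T x) (T.mem_range_self x)]
    · simp
    · exact fun y _ hy => Set.indicator_of_notMem (Ne.symm hy) _
  rw [hsplit, integral_finsetSum _ fun y _ =>
    (integrable_const (g y)).indicator (T.measurableSet_fiber y)]
  simp only [integral_indicator_const _ (T.measurableSet_fiber _), smul_eq_mul]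

lemma crossEnergy_comp_simpleFunc {β : Type*} (T : SimpleFunc α β) (k : β → β → ℝ)
    (μ ν : Measure α) [IsFiniteMeasure μ] [IsFiniteMeasure ν] :
    crossEnergy (fun x y => k (T x) (T y)) μ ν
      = ∑ y ∈ T.range, ∑ z ∈ T.range, μ.real (T ⁻¹' {y}) * ν.real (T ⁻¹' {z}) * k y z := by
  unfold crossEnergy
  simp_rw [integral_comp_simpleFunc T (k (T _)) ν]
  rw [integral_comp_simpleFunc T (fun y => ∑ z ∈ T.range, ν.real (T ⁻¹' {z}) * k y z) μ]
  simp only [Finset.mul_sum, mul_assoc]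

end Energy

section BalancedPosDef

variable {X : Type*} {c : X → X → ℝ}

def IsBalancedPosDef (c : X → X → ℝ) : Prop :=
  ∀ (n : ℕ) (x : Fin n → X) (a : Fin n → ℝ), ∑ i, a i = 0 →
    0 ≤ ∑ i, ∑ j, c (x i) (x j) * a i * a j

lemma IsBalancedPosDef.sum_finset_nonneg (hc : IsBalancedPosDef c) (s : Finset X) (a : X → ℝ)
    (ha : ∑ y ∈ s, a y = 0) : 0 ≤ ∑ y ∈ s, ∑ z ∈ s, c y z * a y * a z := by
  have reindex : ∀ f : X → ℝ, ∑ i, f (s.equivFin.symm i) = ∑ y ∈ s, f y := fun f =>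
    (s.equivFin.symm.sum_comp (fun y : s => f y)).trans (s.sum_coe_sort f)
  have h := hc s.card (fun i => s.equivFin.symm i) (fun i => a (s.equivFin.symm i))
    ((reindex a).trans ha)
  refine h.trans_eq ?_
  rw [← reindex]
  exact Fintype.sum_congr _ _ fun i =>
    reindex fun z => c (s.equivFin.symm i) z * a (s.equivFin.symm i) * a z

lemma IsBalancedPosDef.sum_cross_le (hc : IsBalancedPosDef c) (s : Finset X) (p q : X → ℝ)
    (hpq : ∑ y ∈ s, p y = ∑ y ∈ s, q y) :
    ∑ y ∈ s, ∑ z ∈ s, p y * q z * c y z + ∑ y ∈ s, ∑ z ∈ s, q y * p z * c y z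
      ≤ ∑ y ∈ s, ∑ z ∈ s, p y * p z * c y z + ∑ y ∈ s, ∑ z ∈ s, q y * q z * c y z := by
  have h := hc.sum_finset_nonneg s (p - q) (by simp [Finset.sum_sub_distrib, hpq])
  rw [← sub_nonneg]
  convert h using 1
  simp only [← Finset.sum_add_distrib, ← Finset.sum_sub_distrib]
  exact Finset.sum_congr rfl fun y _ => Finset.sum_congr rfl fun z _ => by
    simp only [Pi.sub_apply]; ring

lemma IsBalancedPosDef.crossEnergy_comp_simpleFunc_add_le (hc : IsBalancedPosDef c)
    {α : Type*} [MeasurableSpace α] (T : SimpleFunc α X) (μ ν : Measure α)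
    [IsProbabilityMeasure μ] [IsProbabilityMeasure ν] :
    crossEnergy (fun x y => c (T x) (T y)) μ ν + crossEnergy (fun x y => c (T x) (T y)) ν μ
      ≤ crossEnergy (fun x y => c (T x) (T y)) μ μ
        + crossEnergy (fun x y => c (T x) (T y)) ν ν := by
  have hmass : ∀ (ρ : Measure α) [IsProbabilityMeasure ρ],
      ∑ y ∈ T.range, ρ.real (T ⁻¹' {y}) = 1 := fun ρ _ => by
    rw [sum_measureReal_preimage_singleton _ fun y _ => T.measurableSet_fiber y,
      T.coe_range, Set.preimage_range, probReal_univ]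
  simp only [crossEnergy_comp_simpleFunc]
  exact hc.sum_cross_le _ _ _ ((hmass μ).trans (hmass ν).symm)

lemma IsBalancedPosDef.crossEnergy_add_le [PseudoEMetricSpace X]
    [TopologicalSpace.SeparableSpace X] [MeasurableSpace X] [OpensMeasurableSpace X]
    (hc : IsBalancedPosDef c)
    (hc_cont : Continuous (uncurry c)) {M : ℝ} (hM : ∀ x y, |c x y| ≤ M)
    (μ ν : Measure X) [IsProbabilityMeasure μ] [IsProbabilityMeasure ν] :
    crossEnergy c μ ν + crossEnergy c ν μ ≤ crossEnergy c μ μ + crossEnergy c ν ν := by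
  obtain ⟨x₀⟩ := nonempty_of_isProbabilityMeasure μ
  set T : ℕ → SimpleFunc X X := SimpleFunc.approxOn id measurable_id Set.univ x₀ (Set.mem_univ x₀)
  have hT : ∀ x, Tendsto (fun n => T n x) atTop (𝓝 x) := fun x =>
    SimpleFunc.tendsto_approxOn measurable_id (Set.mem_univ x₀) (by simp)
  have hlim : ∀ (ρ σ : Measure X) [IsProbabilityMeasure ρ] [IsProbabilityMeasure σ],
      Tendsto (fun n => crossEnergy (fun x y => c (T n x) (T n y)) ρ σ) atTop
        (𝓝 (crossEnergy c ρ σ)) := fun ρ σ _ _ =>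
    tendsto_crossEnergy_of_dominated (F := fun n x y => c (T n x) (T n y))
      (fun n => (((T n).comp Prod.fst measurable_fst).pair
        ((T n).comp Prod.snd measurable_snd)).map (uncurry c) |>.stronglyMeasurable)
      (fun _ _ _ => hM _ _)
      (fun x y => (hc_cont.tendsto (x, y)).comp ((hT x).prodMk_nhds (hT y))) ρ σ
  exact le_of_tendsto_of_tendsto' ((hlim μ ν).add (hlim ν μ)) ((hlim μ μ).add (hlim ν ν))
    fun n => hc.crossEnergy_comp_simpleFunc_add_le (T n) μ ν

end BalancedPosDef

theorem stmt_3_general {X : Type*} [TopologicalSpace X] [PolishSpace X]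
    [MeasurableSpace X] [BorelSpace X]
    (c : X → X → ℝ)
    (hc_cont : Continuous fun p : X × X => c p.1 p.2)
    (hc_bdd : ∃ M : ℝ, ∀ x y, |c x y| ≤ M)
    (hpd : ∀ (n : ℕ) (x : Fin n → X) (a : Fin n → ℝ), ∑ i, a i = 0 →
      0 ≤ ∑ i, ∑ j, c (x i) (x j) * a i * a j)
    (K : Measure X → ℝ)
    (hK : ∀ Q : Measure X, K Q = ∫ x, ∫ y, c x y ∂Q ∂Q) :
    ∀ (Q Q' : Measure X), IsProbabilityMeasure Q → IsProbabilityMeasure Q' →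
      ∀ t : ℝ, 0 ≤ t → t ≤ 1 →
        K (ENNReal.ofReal t • Q + ENNReal.ofReal (1 - t) • Q')
          ≤ t * K Q + (1 - t) * K Q' := by
  intro Q Q' _ _ t ht0 ht1
  obtain ⟨M, hM⟩ := hc_bdd
  let := TopologicalSpace.upgradeIsCompletelyMetrizable X
  have hkey : crossEnergy c Q Q' + crossEnergy c Q' Q ≤ crossEnergy c Q Q + crossEnergy c Q' Q' :=
    IsBalancedPosDef.crossEnergy_add_le hpd hc_cont hM Q Q'
  have hmix := crossEnergy_smul_add_smul hc_cont.stronglyMeasurable hM Q Q' ht0 (sub_nonneg.2 ht1)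
  simp only [hK]
  change crossEnergy c _ _ ≤ t * crossEnergy c Q Q + (1 - t) * crossEnergy c Q' Q'
  rw [hmix]
  nlinarith [mul_nonneg (mul_nonneg ht0 (sub_nonneg.2 ht1)) (sub_nonneg.2 hkey)]

/-- If `c` is continuous bounded symmetric and balanced positive definite, then the energy
functional `K` is convex on Borel probability measures. -/
theorem stmt_3 {X : Type*} [TopologicalSpace X] [PolishSpace X]
    [MeasurableSpace X] [BorelSpace X]
    (c : X → X → ℝ)
    (hc_cont : Continuous fun p : X × X => c p.1 p.2)
    (hc_bdd : ∃ M : ℝ, ∀ x y, |c x y| ≤ M)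
    (hc_symm : ∀ x y, c x y = c y x)
    (hc_nonneg : ∀ x y, 0 ≤ c x y)
    (hpd : ∀ (n : ℕ) (x : Fin n → X) (a : Fin n → ℝ), ∑ i, a i = 0 →
      0 ≤ ∑ i, ∑ j, c (x i) (x j) * a i * a j)
    (K : Measure X → ℝ)
    (hK : ∀ Q : Measure X, K Q = ∫ x, ∫ y, c x y ∂Q ∂Q) :
    ∀ (Q Q' : Measure X), IsProbabilityMeasure Q → IsProbabilityMeasure Q' →
      ∀ t : ℝ, 0 ≤ t → t ≤ 1 →
        K (ENNReal.ofReal t • Q + ENNReal.ofReal (1 - t) • Q')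
          ≤ t * K Q + (1 - t) * K Q' :=
  stmt_3_general c hc_cont hc_bdd hpd K hK
end

section
/- For a bounded continuous symmetric kernel c on a Polish space X, the signed-measure energy of a difference of probability measures satisfies: if ∑ᵢⱼ c(xᵢ,xⱼ)aᵢaⱼ ≥ 0 for all balanced real coefficients (∑aᵢ = 0) and points xᵢ, then for all Borel probability measures Q, Q', ∫∫ c d(Q−Q') d(Q−Q') ≥ 0. -/
/-!
Sample independent pairs `z₁, …, zₙ` from `Q ⊗ Q'` and apply balanced positive definiteness
with weight `+1` at each first and `-1` at each second coordinate: the kernel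
`h((x, x'), (y, y')) = c(x, y) - c(x, y') - c(x', y) + c(x', y')` satisfies
`∑ₖ ∑ₗ h(zₖ, zₗ) ≥ 0`. In expectation the `n` diagonal terms contribute `O(n)`, while each of
the `n² - n` off-diagonal terms contributes `∫∫ h d(Q ⊗ Q') d(Q ⊗ Q') = K(Q) - 2E(Q, Q') + K(Q')`.
Dividing by `n²` and letting `n → ∞` shows that this energy is nonnegative.
-/

open MeasureTheory ProbabilityTheory

namespace MeasureTheory

section PiMarginal

variable {ι : Type*} [Fintype ι] {X : ι → Type*} {mX : ∀ i, MeasurableSpace (X i)}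
  {μ : (i : ι) → Measure (X i)} [∀ i, IsProbabilityMeasure (μ i)]

lemma Measure.pi_map_eval_pair {i j : ι} (hij : i ≠ j) :
    (Measure.pi μ).map (fun x => (x i, x j)) = (μ i).prod (μ j) := by
  have hind : IndepFun (fun x : (∀ i, X i) => x i) (fun x => x j) (Measure.pi μ) :=
    (iIndepFun_pi (X := fun _ => id) fun _ => aemeasurable_id).indepFun hij
  rw [hind.map_prod_eq_prod_map_map (measurable_pi_apply i).aemeasurable
    (measurable_pi_apply j).aemeasurable, (measurePreserving_eval μ i).map_eq,
    (measurePreserving_eval μ j).map_eq]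

lemma integral_comp_eval_pair {E : Type*} [NormedAddCommGroup E] [NormedSpace ℝ E] {i j : ι}
    (hij : i ≠ j) {f : X i × X j → E} (hf : AEStronglyMeasurable f ((μ i).prod (μ j))) :
    ∫ x, f (x i, x j) ∂Measure.pi μ = ∫ w, f w ∂(μ i).prod (μ j) := by
  rw [← Measure.pi_map_eval_pair hij, integral_map (by fun_prop)]
  rwa [Measure.pi_map_eval_pair hij]

end PiMarginal

lemma integral_comp_prodMap {α β γ δ : Type*} [MeasurableSpace α] [MeasurableSpace β]
    [MeasurableSpace γ] [MeasurableSpace δ] {μ : Measure α} {ν : Measure β} [SFinite μ]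
    [SFinite ν] {f : α → γ} {g : β → δ} (hf : Measurable f) (hg : Measurable g)
    {F : γ × δ → ℝ} (hF : Measurable F) :
    ∫ w, F (f w.1, g w.2) ∂μ.prod ν = ∫ v, F v ∂(μ.map f).prod (ν.map g) := by
  rw [Measure.map_prod_map μ ν hf hg, integral_map (hf.prodMap hg).aemeasurable
    hF.aestronglyMeasurable]
  rfl

end MeasureTheory

lemma nonneg_of_forall_add_nat_mul_nonneg {a b : ℝ} (h : ∀ n : ℕ, 0 ≤ a + n * b) : 0 ≤ b := by
  by_contra! hb
  obtain ⟨n, hn⟩ := exists_nat_gt (a / -b)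
  rw [div_lt_iff₀ (neg_pos.mpr hb)] at hn
  linarith [h n]

section Energy

variable {Y : Type*} [MeasurableSpace Y] {μ : Measure Y} [IsProbabilityMeasure μ]
  {h : Y → Y → ℝ}

lemma integral_sum_sum_pi (hh : Measurable fun p : Y × Y => h p.1 p.2)
    (hb : ∃ C, ∀ x y, |h x y| ≤ C) (n : ℕ) :
    ∫ ω, ∑ k, ∑ l, h (ω k) (ω l) ∂Measure.pi (fun _ : Fin n => μ) =
      n * ∫ x, h x x ∂μ + ((n : ℝ) ^ 2 - n) * ∫ w, h w.1 w.2 ∂μ.prod μ := by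
  obtain ⟨C, hC⟩ := hb
  have hint (k l : Fin n) :
      Integrable (fun ω : Fin n → Y => h (ω k) (ω l)) (Measure.pi fun _ => μ) :=
    .of_bound (hh.comp (f := fun ω : Fin n → Y => (ω k, ω l)) (by fun_prop)).aestronglyMeasurable
      C (ae_of_all _ fun _ => hC _ _)
  have hterm (k l : Fin n) : ∫ ω, h (ω k) (ω l) ∂Measure.pi (fun _ => μ) =
      ∫ w, h w.1 w.2 ∂μ.prod μ +
        if k = l then ∫ x, h x x ∂μ - ∫ w, h w.1 w.2 ∂μ.prod μ else 0 := by
    rcases eq_or_ne k l with rfl | hkl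
    · have hdiag : Measurable fun x => h x x := hh.comp (f := fun x : Y => (x, x)) (by fun_prop)
      refine (integral_comp_eval (μ := fun _ => μ) hdiag.aestronglyMeasurable).trans ?_
      simp
    · refine (integral_comp_eval_pair (μ := fun _ => μ) hkl (f := fun p => h p.1 p.2)
        hh.aestronglyMeasurable).trans ?_
      simp [hkl]
  rw [integral_finsetSum _ fun k _ => integrable_finsetSum _ fun l _ => hint k l]
  simp_rw [integral_finsetSum _ fun l _ => hint _ l, hterm, Finset.sum_add_distrib,
    Finset.sum_ite_eq, Finset.mem_univ, if_true, Finset.sum_const, Finset.card_univ,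
    Fintype.card_fin, nsmul_eq_mul]
  ring

lemma integral_prod_nonneg_of_forall_sum_sum_nonneg (hh : Measurable fun p : Y × Y => h p.1 p.2)
    (hb : ∃ C, ∀ x y, |h x y| ≤ C) (hpos : ∀ n (z : Fin n → Y), 0 ≤ ∑ k, ∑ l, h (z k) (z l)) :
    0 ≤ ∫ w, h w.1 w.2 ∂μ.prod μ := by
  refine nonneg_of_forall_add_nat_mul_nonneg (a := ∫ x, h x x ∂μ) fun n => ?_
  have hsum := integral_nonneg (μ := Measure.pi fun _ : Fin (n + 1) => μ)
    (f := fun ω => ∑ k, ∑ l, h (ω k) (ω l)) fun ω => hpos _ ω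
  rw [integral_sum_sum_pi hh hb] at hsum
  push_cast at hsum
  nlinarith

end Energy

section DifferenceKernel

variable {X : Type*} {c : X → X → ℝ}

/-- `diffKernel c (x, x') (y, y')` is the `c`-pairing of `δ_x - δ_x'` with `δ_y - δ_y'`. -/
def diffKernel (c : X → X → ℝ) (p q : X × X) : ℝ :=
  c p.1 q.1 - c p.1 q.2 - c p.2 q.1 + c p.2 q.2

lemma sum_sum_diffKernel_nonneg
    (hbpd : ∀ (n : ℕ) (x : Fin n → X) (a : Fin n → ℝ), ∑ i, a i = 0 →
      0 ≤ ∑ i, ∑ j, c (x i) (x j) * a i * a j) (n : ℕ) (z : Fin n → X × X) :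
    0 ≤ ∑ k, ∑ l, diffKernel c (z k) (z l) := by
  have := hbpd (n + n) (Fin.append (fun k => (z k).1) (fun k => (z k).2)) (Fin.append 1 (-1))
    (by simp only [Fin.sum_univ_add, Fin.append_left, Fin.append_right, Pi.one_apply,
      Pi.neg_apply]; simp)
  simp only [Fin.sum_univ_add, Fin.append_left, Fin.append_right, Pi.one_apply, Pi.neg_apply,
    mul_one, mul_neg, Finset.sum_add_distrib, Finset.sum_neg_distrib] at this
  simp only [diffKernel, Finset.sum_add_distrib, Finset.sum_sub_distrib]
  linarith

lemma abs_diffKernel_le {M : ℝ} (hM : ∀ x y, |c x y| ≤ M) (p q : X × X) :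
    |diffKernel c p q| ≤ 4 * M := by
  have h11 := abs_le.mp (hM p.1 q.1)
  have h12 := abs_le.mp (hM p.1 q.2)
  have h21 := abs_le.mp (hM p.2 q.1)
  have h22 := abs_le.mp (hM p.2 q.2)
  rw [diffKernel, abs_le]
  constructor <;> linarith [h11.1, h11.2, h12.1, h12.2, h21.1, h21.2, h22.1, h22.2]

variable [MeasurableSpace X]

lemma measurable_diffKernel (hc : Measurable fun p : X × X => c p.1 p.2) :
    Measurable fun w : (X × X) × (X × X) => diffKernel c w.1 w.2 := by
  unfold diffKernel
  fun_prop

lemma integral_diffKernel {Q Q' : Measure X} [IsProbabilityMeasure Q] [IsProbabilityMeasure Q']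
    (hc : Measurable fun p : X × X => c p.1 p.2) (hb : ∃ C, ∀ x y, |c x y| ≤ C) :
    ∫ w, diffKernel c w.1 w.2 ∂(Q.prod Q').prod (Q.prod Q') =
      ∫ v, c v.1 v.2 ∂Q.prod Q - ∫ v, c v.1 v.2 ∂Q.prod Q' - ∫ v, c v.1 v.2 ∂Q'.prod Q +
        ∫ v, c v.1 v.2 ∂Q'.prod Q' := by
  obtain ⟨C, hC⟩ := hb
  have hint {f g : X × X → X} (hf : Measurable f) (hg : Measurable g) :
      Integrable (fun w => c (f w.1) (g w.2)) ((Q.prod Q').prod (Q.prod Q')) :=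
    .of_bound (hc.comp (f := fun w : (X × X) × (X × X) => (f w.1, g w.2))
      (by fun_prop)).aestronglyMeasurable C (ae_of_all _ fun _ => hC _ _)
  have hterm {f g : X × X → X} (hf : Measurable f) (hg : Measurable g) :
      ∫ w, c (f w.1) (g w.2) ∂(Q.prod Q').prod (Q.prod Q') =
        ∫ v, c v.1 v.2 ∂((Q.prod Q').map f).prod ((Q.prod Q').map g) :=
    integral_comp_prodMap hf hg hc
  have h11 := hint measurable_fst measurable_fst
  have h12 := hint measurable_fst measurable_snd
  have h21 := hint measurable_snd measurable_fst
  have h22 := hint measurable_snd measurable_snd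
  simp only [diffKernel]
  rw [integral_add (by exact (h11.sub h12).sub h21) h22, integral_sub (by exact h11.sub h12) h21,
    integral_sub h11 h12, hterm measurable_fst measurable_fst, hterm measurable_fst measurable_snd,
    hterm measurable_snd measurable_fst, hterm measurable_snd measurable_snd]
  simp

end DifferenceKernel

/-- Balanced positive definiteness implies nonnegativity of the energy of the difference
of two probability measures: `K(Q) − 2E(Q,Q') + K(Q') ≥ 0`. -/
theorem stmt_6 {X : Type*} [TopologicalSpace X] [PolishSpace X]
    [MeasurableSpace X] [BorelSpace X]
    (c : X → X → ℝ)
    (hc_cont : Continuous fun p : X × X => c p.1 p.2)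
    (hc_bdd : ∃ M : ℝ, ∀ x y, |c x y| ≤ M)
    (hc_symm : ∀ x y, c x y = c y x)
    (hbpd : ∀ (n : ℕ) (x : Fin n → X) (a : Fin n → ℝ), ∑ i, a i = 0 →
      0 ≤ ∑ i, ∑ j, c (x i) (x j) * a i * a j)
    (K : Measure X → ℝ)
    (hK : ∀ Q : Measure X, K Q = ∫ x, ∫ y, c x y ∂Q ∂Q)
    (E : Measure X → Measure X → ℝ)
    (hE : ∀ Q Q' : Measure X, E Q Q' = ∫ x, ∫ y, c x y ∂Q' ∂Q) :
    ∀ Q Q' : Measure X, IsProbabilityMeasure Q → IsProbabilityMeasure Q' →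
      0 ≤ K Q - 2 * E Q Q' + K Q' := by
  intro Q Q' _ _
  have hc : Measurable fun p : X × X => c p.1 p.2 := hc_cont.measurable
  obtain ⟨M, hM⟩ := hc_bdd
  have hiter (μ ν : Measure X) [IsProbabilityMeasure μ] [IsProbabilityMeasure ν] :
      ∫ x, ∫ y, c x y ∂ν ∂μ = ∫ v, c v.1 v.2 ∂μ.prod ν :=
    (integral_prod _ (.of_bound hc.aestronglyMeasurable M (ae_of_all _ fun v => hM v.1 v.2))).symm
  have hswap : ∫ v, c v.1 v.2 ∂Q'.prod Q = ∫ v, c v.1 v.2 ∂Q.prod Q' := by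
    rw [← integral_prod_swap]
    simp only [Prod.fst_swap, Prod.snd_swap, hc_symm]
  have henergy := integral_prod_nonneg_of_forall_sum_sum_nonneg (μ := Q.prod Q')
    (measurable_diffKernel hc) ⟨4 * M, abs_diffKernel_le hM⟩ (sum_sum_diffKernel_nonneg hbpd)
  rw [integral_diffKernel hc ⟨M, hM⟩, hswap] at henergy
  rw [hK, hK, hE, hiter, hiter, hiter]
  linarith
end

section
/- Strict convexity transfer: if K is strictly convex on probability measures of finite energy (K(tQ+(1−t)Q') < tK(Q)+(1−t)K(Q') for Q ≠ Q', t ∈ (0,1)), then for any probability measure ν on P(X) concentrated on {K < ∞} that is not a Dirac mass, with barycenter μ, the strict inequality ∫∫ c dμ⊗μ < ∫ K(Q) dν(Q) holds. -/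
/-!
Write `E(Q, Q') = ∫∫ c dQ dQ'`. Since `μ` is the `ν`-mixture of the measures `Q`,
`∫ c d(μ ⊗ μ) = ∫ E d(ν ⊗ ν)`. By bilinearity and symmetry of `E`, strict convexity of `K` at the
midpoint of `Q ≠ Q'` reads `2 E(Q, Q') < K Q + K Q'`, while `E(Q, Q) = K Q`. Integrating over
`ν ⊗ ν` gives `∫ E d(ν ⊗ ν) ≤ ∫ K dν`, and equality would force `ν ⊗ ν` to live on the diagonal,
i.e. `ν` to be a Dirac mass.
-/

open MeasureTheory ProbabilityTheory ENNReal

namespace MeasureTheory.Measure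

variable {α β γ δ : Type*} [MeasurableSpace α] [MeasurableSpace β] [MeasurableSpace γ]
  [MeasurableSpace δ]

lemma integral_comp {E : Type*} [NormedAddCommGroup E] [NormedSpace ℝ E] {μ : Measure α}
    {κ : Kernel α β} {f : β → E} (hf : Integrable f (κ ∘ₘ μ)) :
    ∫ y, f y ∂(κ ∘ₘ μ) = ∫ x, ∫ y, f y ∂κ x ∂μ := by
  rw [comp_eq_comp_const_apply] at hf ⊢
  rw [Kernel.integral_comp hf, Kernel.const_apply]

lemma prod_comp_comp {μ : Measure α} {ν : Measure γ} [SFinite μ] [SFinite ν]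
    (κ : Kernel α β) [IsSFiniteKernel κ] (η : Kernel γ δ) [IsSFiniteKernel η] :
    (κ ∘ₘ μ).prod (η ∘ₘ ν) = (κ ∥ₖ η) ∘ₘ μ.prod ν := by
  rw [prod_comp_left, prod_comp_right, comp_assoc, Kernel.parallelComp_comp_parallelComp,
    Kernel.id_comp, Kernel.comp_id]

lemma exists_eq_dirac_of_ae_prod_eq {ν : Measure α} [IsProbabilityMeasure ν]
    (h : ∀ᵐ p ∂ν.prod ν, p.1 = p.2) : ∃ a, ν = dirac a := by
  obtain ⟨a, ha⟩ := (ae_ae_of_ae_prod h).exists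
  refine ⟨a, ext fun s hs => ?_⟩
  rw [dirac_apply' _ hs]
  by_cases has : a ∈ s
  · rw [Set.indicator_of_mem has, Pi.one_apply, ← prob_compl_eq_zero_iff hs]
    exact ae_iff.mp (ha.mono fun b (hab : a = b) => hab ▸ has)
  · rw [Set.indicator_of_notMem has]
    exact measure_eq_zero_iff_ae_notMem.mpr (ha.mono fun b (hab : a = b) => hab ▸ has)

lemma integral_prod_lt_integral_of_not_dirac {ν : Measure α} [IsProbabilityMeasure ν]
    (hν : ∀ a, ν ≠ dirac a) {F : α × α → ℝ} {G : α → ℝ} (hF : Integrable F (ν.prod ν))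
    (hG : Integrable G ν) (hle : ∀ᵐ p ∂ν.prod ν, 2 * F p ≤ G p.1 + G p.2)
    (hlt : ∀ᵐ p ∂ν.prod ν, p.1 ≠ p.2 → 2 * F p < G p.1 + G p.2) :
    ∫ p, F p ∂ν.prod ν < ∫ a, G a ∂ν := by
  set gap : α × α → ℝ := fun p => G p.1 + G p.2 - 2 * F p
  have hG₂ : Integrable (fun p : α × α => G p.1 + G p.2) (ν.prod ν) :=
    (hG.comp_fst ν).add (hG.comp_snd ν)
  have hgap_int : Integrable gap (ν.prod ν) := hG₂.sub (hF.const_mul 2)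
  have hgap_eq : ∫ p, gap p ∂ν.prod ν = 2 * ∫ a, G a ∂ν - 2 * ∫ p, F p ∂ν.prod ν := by
    rw [integral_sub hG₂ (hF.const_mul 2), integral_add (hG.comp_fst ν) (hG.comp_snd ν),
      integral_fun_fst, integral_fun_snd, integral_const_mul]
    simp only [probReal_univ, one_smul]
    ring
  have hgap_nonneg : 0 ≤ᵐ[ν.prod ν] gap := hle.mono fun p hp => sub_nonneg.mpr hp
  have hgap_pos : 0 < ∫ p, gap p ∂ν.prod ν := by
    refine (integral_pos_iff_support_of_nonneg_ae hgap_nonneg hgap_int).mpr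
      (pos_iff_ne_zero.mpr fun hsupp => ?_)
    have hdiag : ∀ᵐ p ∂ν.prod ν, p.1 = p.2 := by
      filter_upwards [(measure_support_eq_zero_iff _).mp hsupp, hlt] with p hp0 hp
      by_contra hne
      have := hp hne
      simp only [gap, Pi.zero_apply] at hp0
      linarith
    obtain ⟨a, rfl⟩ := exists_eq_dirac_of_ae_prod_eq hdiag
    exact hν a rfl
  linarith

end MeasureTheory.Measure

section ProbKernel

variable {X : Type*} [MeasurableSpace X]

/- The identity `Q ↦ Q` is not an s-finite kernel on all of `Measure X`; cutting it off outside
the probability measures makes it one, so that the kernel API applies to `ν`-mixtures. -/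
open Classical in
noncomputable def probKernel (X : Type*) [MeasurableSpace X] : Kernel (Measure X) X where
  toFun Q := if IsProbabilityMeasure Q then Q else 0
  measurable' := Measurable.ite ProbabilityMeasure.measurableSet_isProbabilityMeasure
    measurable_id measurable_const

lemma probKernel_apply (Q : Measure X) [IsProbabilityMeasure Q] : probKernel X Q = Q :=
  if_pos ‹_›

instance : IsFiniteKernel (probKernel X) := by
  refine ⟨⟨1, one_lt_top, fun Q => ?_⟩⟩
  by_cases hQ : IsProbabilityMeasure Q
  · rw [probKernel_apply, measure_univ]
  · simp [probKernel, hQ]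

lemma probKernel_comp {ν : Measure (Measure X)} (hν : ∀ᵐ Q ∂ν, IsProbabilityMeasure Q) :
    probKernel X ∘ₘ ν = ν.join := by
  rw [Measure.join_eq_bind]
  exact Measure.bind_congr_right (hν.mono fun Q _ => probKernel_apply Q)

end ProbKernel

section MutualEnergy

variable {X : Type*} [MeasurableSpace X] {c : X → X → ℝ} {M : ℝ}

noncomputable def mutualEnergy (c : X → X → ℝ) (Q Q' : Measure X) : ℝ :=
  ∫ p, c p.1 p.2 ∂Q.prod Q'

lemma integrable_uncurry_of_abs_le (hc : Measurable fun p : X × X => c p.1 p.2)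
    (hM : ∀ x y, |c x y| ≤ M) (ρ : Measure (X × X)) [IsFiniteMeasure ρ] :
    Integrable (fun p : X × X => c p.1 p.2) ρ :=
  Integrable.of_bound hc.aestronglyMeasurable M (ae_of_all _ fun p => by simpa using hM p.1 p.2)

lemma mutualEnergy_eq_integral_integral (hc : Measurable fun p : X × X => c p.1 p.2)
    (hM : ∀ x y, |c x y| ≤ M) (Q Q' : Measure X) [IsFiniteMeasure Q] [IsFiniteMeasure Q'] :
    mutualEnergy c Q Q' = ∫ x, ∫ y, c x y ∂Q' ∂Q :=
  integral_prod _ (integrable_uncurry_of_abs_le hc hM _)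

lemma mutualEnergy_comm (hc_symm : ∀ x y, c x y = c y x) (Q Q' : Measure X) [SFinite Q]
    [SFinite Q'] : mutualEnergy c Q Q' = mutualEnergy c Q' Q := by
  rw [mutualEnergy, mutualEnergy, ← integral_prod_swap]
  simp only [Prod.fst_swap, Prod.snd_swap, hc_symm]

lemma mutualEnergy_add_left (hc : Measurable fun p : X × X => c p.1 p.2)
    (hM : ∀ x y, |c x y| ≤ M) (Q Q' R : Measure X) [IsFiniteMeasure Q] [IsFiniteMeasure Q']
    [IsFiniteMeasure R] :
    mutualEnergy c (Q + Q') R = mutualEnergy c Q R + mutualEnergy c Q' R := by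
  rw [mutualEnergy, Measure.add_prod, integral_add_measure
    (integrable_uncurry_of_abs_le hc hM _) (integrable_uncurry_of_abs_le hc hM _)]
  rfl

lemma mutualEnergy_smul_left (a : ℝ≥0∞) (Q R : Measure X) [SFinite R] :
    mutualEnergy c (a • Q) R = a.toReal * mutualEnergy c Q R := by
  rw [mutualEnergy, Measure.prod_smul_left, integral_smul_measure, smul_eq_mul, mutualEnergy]

lemma abs_mutualEnergy_le (hM : ∀ x y, |c x y| ≤ M) (Q Q' : Measure X)
    [IsProbabilityMeasure Q] [IsProbabilityMeasure Q'] : |mutualEnergy c Q Q'| ≤ M := by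
  simpa [mutualEnergy] using norm_integral_le_of_norm_le_const (μ := Q.prod Q')
    (f := fun p => c p.1 p.2) (ae_of_all _ fun p => by simpa using hM p.1 p.2)

lemma mutualEnergy_smul_add_smul_self (hc : Measurable fun p : X × X => c p.1 p.2)
    (hM : ∀ x y, |c x y| ≤ M) (hc_symm : ∀ x y, c x y = c y x) {t : ℝ} (ht₀ : 0 ≤ t)
    (ht₁ : t ≤ 1) (Q Q' : Measure X) [IsFiniteMeasure Q] [IsFiniteMeasure Q'] :
    mutualEnergy c (ENNReal.ofReal t • Q + ENNReal.ofReal (1 - t) • Q')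
        (ENNReal.ofReal t • Q + ENNReal.ofReal (1 - t) • Q')
      = t ^ 2 * mutualEnergy c Q Q + 2 * t * (1 - t) * mutualEnergy c Q Q'
        + (1 - t) ^ 2 * mutualEnergy c Q' Q' := by
  set m := ENNReal.ofReal t • Q + ENNReal.ofReal (1 - t) • Q'
  have := Q.smul_finite (ofReal_ne_top (r := t))
  have := Q'.smul_finite (ofReal_ne_top (r := 1 - t))
  have hleft : ∀ R : Measure X, [IsFiniteMeasure R] →
      mutualEnergy c m R = t * mutualEnergy c Q R + (1 - t) * mutualEnergy c Q' R :=
    fun R _ => by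
      rw [mutualEnergy_add_left hc hM, mutualEnergy_smul_left, mutualEnergy_smul_left,
        toReal_ofReal ht₀, toReal_ofReal (sub_nonneg.mpr ht₁)]
  rw [hleft, mutualEnergy_comm hc_symm Q, mutualEnergy_comm hc_symm Q', hleft, hleft,
    mutualEnergy_comm hc_symm Q' Q]
  ring

lemma two_mul_mutualEnergy_lt (hc : Measurable fun p : X × X => c p.1 p.2)
    (hM : ∀ x y, |c x y| ≤ M) (hc_symm : ∀ x y, c x y = c y x) {K : Measure X → ℝ}
    (hK : ∀ (Q : Measure X) [IsFiniteMeasure Q], K Q = mutualEnergy c Q Q)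
    (hstrict : ∀ (Q Q' : Measure X), IsProbabilityMeasure Q → IsProbabilityMeasure Q' →
      Q ≠ Q' → ∀ t : ℝ, 0 < t → t < 1 →
        K (ENNReal.ofReal t • Q + ENNReal.ofReal (1 - t) • Q') < t * K Q + (1 - t) * K Q')
    {Q Q' : Measure X} [IsProbabilityMeasure Q] [IsProbabilityMeasure Q'] (hne : Q ≠ Q') :
    2 * mutualEnergy c Q Q' < K Q + K Q' := by
  have h := hstrict Q Q' ‹_› ‹_› hne (1 / 2) (by norm_num) (by norm_num)
  have := Q.smul_finite (ofReal_ne_top (r := 1 / 2))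
  have := Q'.smul_finite (ofReal_ne_top (r := 1 - 1 / 2))
  rw [hK, hK Q, hK Q',
    mutualEnergy_smul_add_smul_self hc hM hc_symm (by norm_num) (by norm_num)] at h
  rw [hK Q, hK Q']
  linarith

end MutualEnergy

section Mixture

variable {X : Type*} [MeasurableSpace X] {c : X → X → ℝ} {M : ℝ}

lemma stronglyMeasurable_mutualEnergy_probKernel (hc : Measurable fun p : X × X => c p.1 p.2) :
    StronglyMeasurable fun p : Measure X × Measure X =>
      mutualEnergy c (probKernel X p.1) (probKernel X p.2) := by
  simp_rw [mutualEnergy, ← Kernel.parallelComp_apply]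
  exact hc.stronglyMeasurable.integral_kernel

lemma integrable_mutualEnergy (hc : Measurable fun p : X × X => c p.1 p.2)
    (hM : ∀ x y, |c x y| ≤ M) {ρ : Measure (Measure X × Measure X)} [IsFiniteMeasure ρ]
    (hρ : ∀ᵐ p ∂ρ, IsProbabilityMeasure p.1 ∧ IsProbabilityMeasure p.2) :
    Integrable (fun p => mutualEnergy c p.1 p.2) ρ := by
  refine Integrable.of_bound
    ((stronglyMeasurable_mutualEnergy_probKernel hc).aestronglyMeasurable.congr
      (hρ.mono fun p ⟨_, _⟩ => ?_)) M
    (hρ.mono fun p ⟨_, _⟩ => abs_mutualEnergy_le hM p.1 p.2)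
  simp only [probKernel_apply]

lemma integrable_mutualEnergy_self (hc : Measurable fun p : X × X => c p.1 p.2)
    (hM : ∀ x y, |c x y| ≤ M) {ν : Measure (Measure X)} [IsFiniteMeasure ν]
    (hν : ∀ᵐ Q ∂ν, IsProbabilityMeasure Q) :
    Integrable (fun Q => mutualEnergy c Q Q) ν := by
  refine Integrable.of_bound (((stronglyMeasurable_mutualEnergy_probKernel hc).comp_measurable
    (measurable_id.prodMk measurable_id)).aestronglyMeasurable.congr
    (hν.mono fun Q _ => ?_)) M (hν.mono fun Q _ => abs_mutualEnergy_le hM Q Q)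
  simp only [Function.comp_apply, id, probKernel_apply]

lemma ae_isProbabilityMeasure_prod {ν : Measure (Measure X)} [SFinite ν]
    (hν : ∀ᵐ Q ∂ν, IsProbabilityMeasure Q) :
    ∀ᵐ p ∂ν.prod ν, IsProbabilityMeasure p.1 ∧ IsProbabilityMeasure p.2 :=
  (Measure.quasiMeasurePreserving_fst.ae hν).and (Measure.quasiMeasurePreserving_snd.ae hν)

lemma integral_join_prod_join (hc : Measurable fun p : X × X => c p.1 p.2)
    (hM : ∀ x y, |c x y| ≤ M) {ν : Measure (Measure X)} [IsProbabilityMeasure ν]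
    (hν : ∀ᵐ Q ∂ν, IsProbabilityMeasure Q) :
    ∫ p, c p.1 p.2 ∂ν.join.prod ν.join = ∫ p, mutualEnergy c p.1 p.2 ∂ν.prod ν := by
  rw [← probKernel_comp hν, Measure.prod_comp_comp,
    Measure.integral_comp (integrable_uncurry_of_abs_le hc hM _)]
  refine integral_congr_ae ((ae_isProbabilityMeasure_prod hν).mono fun p ⟨_, _⟩ => ?_)
  dsimp only
  rw [Kernel.parallelComp_apply, probKernel_apply, probKernel_apply, mutualEnergy]

end Mixture

theorem stmt_16_general {X : Type*}
    [MeasurableSpace X]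
    (c : X → X → ℝ)
    (hc_meas : Measurable fun p : X × X => c p.1 p.2)
    (hc_bdd : ∃ M : ℝ, ∀ x y, |c x y| ≤ M)
    (hc_symm : ∀ x y, c x y = c y x)
    (K : Measure X → ℝ)
    (hK : ∀ Q : Measure X, K Q = ∫ x, ∫ y, c x y ∂Q ∂Q)
    (hstrict : ∀ (Q Q' : Measure X), IsProbabilityMeasure Q → IsProbabilityMeasure Q' →
      Q ≠ Q' → ∀ t : ℝ, 0 < t → t < 1 →
        K (ENNReal.ofReal t • Q + ENNReal.ofReal (1 - t) • Q')
          < t * K Q + (1 - t) * K Q')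
    (ν : Measure (Measure X)) [IsProbabilityMeasure ν]
    (hν : ∀ᵐ Q ∂ν, IsProbabilityMeasure Q)
    (hνnotdirac : ∀ Q₀ : Measure X, ν ≠ Measure.dirac Q₀)
    (μ : Measure X) (hμ : μ = ν.join) :
    ∫ p : X × X, c p.1 p.2 ∂(μ.prod μ) < ∫ Q, K Q ∂ν := by
  subst hμ
  obtain ⟨M, hM⟩ := hc_bdd
  have hK_eq : ∀ (Q : Measure X) [IsFiniteMeasure Q], K Q = mutualEnergy c Q Q := fun Q _ => by
    rw [hK, mutualEnergy_eq_integral_integral hc_meas hM]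
  have hK_int : Integrable K ν := (integrable_mutualEnergy_self hc_meas hM hν).congr
    (hν.mono fun Q _ => (hK_eq Q).symm)
  have hprob := ae_isProbabilityMeasure_prod hν
  rw [integral_join_prod_join hc_meas hM hν]
  refine Measure.integral_prod_lt_integral_of_not_dirac hνnotdirac
    (integrable_mutualEnergy hc_meas hM hprob) hK_int ?_ ?_
  · filter_upwards [hprob] with ⟨Q, Q'⟩ ⟨_, _⟩
    obtain rfl | hne := eq_or_ne Q Q'
    · rw [hK_eq Q]
      linarith
    · exact (two_mul_mutualEnergy_lt hc_meas hM hc_symm hK_eq hstrict hne).le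
  · filter_upwards [hprob] with ⟨Q, Q'⟩ ⟨_, _⟩ hne
    exact two_mul_mutualEnergy_lt hc_meas hM hc_symm hK_eq hstrict hne

/-- Strict convexity transfer: if `K` is strictly convex on probability measures, then for any
non-Dirac mixing measure `ν` with barycenter `μ`, the energy of `μ⊗μ` is strictly smaller
than the average energy `∫ K dν`. -/
theorem stmt_16 {X : Type*} [TopologicalSpace X] [PolishSpace X]
    [MeasurableSpace X] [BorelSpace X]
    (c : X → X → ℝ)
    (hc_meas : Measurable fun p : X × X => c p.1 p.2)
    (hc_bdd : ∃ M : ℝ, ∀ x y, |c x y| ≤ M)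
    (hc_symm : ∀ x y, c x y = c y x)
    (hc_nonneg : ∀ x y, 0 ≤ c x y)
    (K : Measure X → ℝ)
    (hK : ∀ Q : Measure X, K Q = ∫ x, ∫ y, c x y ∂Q ∂Q)
    (hstrict : ∀ (Q Q' : Measure X), IsProbabilityMeasure Q → IsProbabilityMeasure Q' →
      Q ≠ Q' → ∀ t : ℝ, 0 < t → t < 1 →
        K (ENNReal.ofReal t • Q + ENNReal.ofReal (1 - t) • Q')
          < t * K Q + (1 - t) * K Q')
    (ν : Measure (Measure X)) [IsProbabilityMeasure ν]
    (hν : ∀ᵐ Q ∂ν, IsProbabilityMeasure Q)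
    (hνnotdirac : ∀ Q₀ : Measure X, ν ≠ Measure.dirac Q₀)
    (μ : Measure X) (hμ : μ = ν.join) :
    ∫ p : X × X, c p.1 p.2 ∂(μ.prod μ) < ∫ Q, K Q ∂ν :=
  stmt_16_general c hc_meas hc_bdd hc_symm K hK hstrict ν hν hνnotdirac μ hμ
end
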